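/- Let ω, β, μ, p, α, q, μ₁ be strictly positive real numbers and set R₀ = βαω/(μ(p + μ)(q + μ₁)). Suppose (S, I, B) ∈ ℝ³ satisfies the equilibrium equations ω − βSB − μS = 0, βSB − (p + μ)I = 0, αI − (q + μ₁)B = 0. Then either (S, I, B) = (ω/μ, 0, 0), or (S, I, B) = ((p + μ)(q + μ₁)/(αβ), μ(μ₁ + q)(R₀ − 1)/(αβ), μ(R₀ − 1)/β). In other words, E₀ and E₁ are the only equilibria of the deterministic within-host system. -/

import Mathlib

theorem equilibria_classification (ω β μ p α q μ₁ S I B : ℝ)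
    (hω : 0 < ω) (hβ : 0 < β) (hμ : 0 < μ) (hp : 0 < p) (hα : 0 < α)
    (hq : 0 < q) (hμ₁ : 0 < μ₁)
    (h1 : ω - β * S * B - μ * S = 0)
    (h2 : β * S * B - (p + μ) * I = 0)
    (h3 : α * I - (q + μ₁) * B = 0) :
    (S, I, B) = (ω / μ, (0 : ℝ), (0 : ℝ)) ∨
    (S, I, B) = ((p + μ) * (q + μ₁) / (α * β),
      μ * (μ₁ + q) * (β * α * ω / (μ * (p + μ) * (q + μ₁)) - 1) / (α * β),
      μ * (β * α * ω / (μ * (p + μ) * (q + μ₁)) - 1) / β) := by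
  rcases eq_or_ne B 0 with hB | hB
  · left
    subst hB
    have hI : I = 0 := by
      have hz : α * I = 0 := by linarith
      exact (mul_eq_zero.mp hz).resolve_left hα.ne'
    subst hI
    have hS : S = ω / μ := by field_simp; linarith
    simp [hS]
  · right
    have hI : I = (q + μ₁) * B / α := by
      field_simp
      linarith
    have hS : S = (p + μ) * (q + μ₁) / (α * β) := by
      have h2' : β * S * B = (p + μ) * ((q + μ₁) * B / α) := by rw [← hI]; linarith
      field_simp at h2' ⊢
      apply mul_right_cancel₀ hB
      linear_combination B * h2'
    have hBval : B = μ * (β * α * ω / (μ * (p + μ) * (q + μ₁)) - 1) / β := by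
      have h1' : ω - β * ((p + μ) * (q + μ₁) / (α * β)) * B
          - μ * ((p + μ) * (q + μ₁) / (α * β)) = 0 := by rw [← hS]; exact h1
      field_simp at h1' ⊢
      nlinarith [h1', hα.ne', hβ.ne']
    have hIval : I = μ * (μ₁ + q) * (β * α * ω / (μ * (p + μ) * (q + μ₁)) - 1) / (α * β) := by
      rw [hI, hBval]; field_simp; ring
    simp [hS, hIval, hBval]
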